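/- arXiv:math/0305131 — 9 statements merged into one kernel-verified Lean document; each statement's English description precedes it below -/
import Mathlib

section
/- For all real t with |t| < 1 and all complex z, sin(z·arctan(t))/(1+t²)^{z/2} = Σ_{k=0}^∞ (−1)^k (z)_{2k+1} t^{2k+1}/(2k+1)!, where (z)_n denotes the rising factorial (Pochhammer symbol). -/
/-!
By the binomial series, `(1 - w) ^ (-z) = ∑ (z)ₙ wⁿ / n!` for `‖w‖ < 1`. Taking `w = ± i t`,
half the difference of the two series keeps only the odd powers, where
`(i t) ^ (2k+1) = i (-1)ᵏ t ^ (2k+1)`. On the other side, the polar form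
`1 ± i t = √(1 + t²) e^{± i arctan t}` turns that half-difference, divided by `i`,
into `(1 + t²) ^ (-z/2) sin (z arctan t)`.
-/

open Real Complex
open scoped Nat

theorem Ring.choose_add_sub_one_eq_ascPochhammer_eval_div {K : Type*} [Field K] [CharZero K]
    (z : K) (n : ℕ) : Ring.choose (z + n - 1) n = (ascPochhammer K n).eval z / n ! := by
  rw [← Ring.multichoose_eq, eq_div_iff (Nat.cast_ne_zero.2 n.factorial_ne_zero), mul_comm,
    ← nsmul_eq_mul, Ring.factorial_nsmul_multichoose_eq_ascPochhammer,
    Polynomial.ascPochhammer_smeval_eq_eval]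

theorem Complex.hasSum_ascPochhammer_div_factorial_mul_pow (z : ℂ) {w : ℂ} (hw : ‖w‖ < 1) :
    HasSum (fun n ↦ (ascPochhammer ℂ n).eval z / n ! * w ^ n) ((1 - w) ^ (-z)) := by
  have h := (one_div_one_sub_cpow_hasFPowerSeriesOnBall_zero z).hasSum
    (y := w) (by simpa [← ofReal_norm] using hw)
  simp only [FormalMultilinearSeries.ofScalars_apply_eq,
    Ring.choose_add_sub_one_eq_ascPochhammer_eval_div, zero_add, one_div, smul_eq_mul] at h
  rwa [cpow_neg]

theorem HasSum.odd_terms {K : Type*} [Field K] [TopologicalSpace K] [IsTopologicalRing K]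
    [NeZero (2 : K)] {c : ℕ → K} {w a b : K} (ha : HasSum (fun n ↦ c n * w ^ n) a)
    (hb : HasSum (fun n ↦ c n * (-w) ^ n) b) :
    HasSum (fun k ↦ c (2 * k + 1) * w ^ (2 * k + 1)) ((a - b) / 2) := by
  have h := (ha.sub hb).div_const 2
  have hinj : Function.Injective (fun k : ℕ ↦ 2 * k + 1) := fun _ _ h ↦ by simpa using h
  rw [← hinj.hasSum_iff] at h
  · convert h using 2 with k
    rw [Function.comp_apply, Odd.neg_pow ⟨k, rfl⟩, mul_neg, sub_neg_eq_add, add_self_div_two]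
  · intro n hn
    obtain ⟨k, rfl⟩ : Even n :=
      (Nat.even_or_odd n).resolve_right fun ⟨k, hk⟩ ↦ hn ⟨k, hk.symm⟩
    simp [Even.neg_pow ⟨k, rfl⟩]

theorem Complex.arg_one_add_ofReal_mul_I (t : ℝ) : arg (1 + t * I) = Real.arctan t := by
  rw [arg_of_re_nonneg (by simp), Real.arctan_eq_arcsin, ← ofReal_one, norm_add_mul_I]
  simp

theorem Complex.one_add_ofReal_mul_I_cpow (t : ℝ) (s : ℂ) :
    (1 + t * I) ^ s = ((1 + t ^ 2 : ℝ) : ℂ) ^ (s / 2) * exp (s * Real.arctan t * I) := by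
  have hpos : (0 : ℝ) < 1 + t ^ 2 := by positivity
  have hne : (1 + t * I) ≠ 0 := fun h ↦ by simpa using congrArg re h
  rw [cpow_def_of_ne_zero hne, cpow_def_of_ne_zero (by exact_mod_cast hpos.ne'), ← exp_add,
    ← ofReal_log hpos.le, Complex.log, arg_one_add_ofReal_mul_I, ← ofReal_one, norm_add_mul_I,
    one_pow, Real.log_sqrt hpos.le]
  congr 1
  push_cast
  ring

theorem Complex.one_sub_ofReal_mul_I_cpow (t : ℝ) (s : ℂ) :
    (1 - t * I) ^ s = ((1 + t ^ 2 : ℝ) : ℂ) ^ (s / 2) * exp (-(s * Real.arctan t * I)) := by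
  simpa [← sub_eq_add_neg] using one_add_ofReal_mul_I_cpow (-t) s

theorem sin_arctan_series (t : ℝ) (ht : |t| < 1) (z : ℂ) :
    Complex.sin (z * Real.arctan t) / ((1 + t ^ 2 : ℝ) : ℂ) ^ (z / 2) =
      ∑' k : ℕ, (-1) ^ k * (ascPochhammer ℂ (2 * k + 1)).eval z * (t : ℂ) ^ (2 * k + 1) /
        (Nat.factorial (2 * k + 1) : ℂ) := by
  have hw : ‖(t : ℂ) * I‖ < 1 := by simpa using ht
  have hodd := ((hasSum_ascPochhammer_div_factorial_mul_pow z hw).odd_terms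
    (hasSum_ascPochhammer_div_factorial_mul_pow z (w := -(t * I)) (by rwa [norm_neg]))).div_const I
  have hclosed : ((1 - t * I) ^ (-z) - (1 - -(t * I)) ^ (-z)) / 2 / I =
      Complex.sin (z * Real.arctan t) / ((1 + t ^ 2 : ℝ) : ℂ) ^ (z / 2) := by
    rw [sub_neg_eq_add, one_sub_ofReal_mul_I_cpow, one_add_ofReal_mul_I_cpow, neg_div, cpow_neg,
      Complex.sin]
    field_simp
    rw [I_sq]
    ring
  rw [← hclosed, ← hodd.tsum_eq]
  refine tsum_congr fun k ↦ ?_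
  rw [mul_pow, pow_succ I, pow_mul, I_sq]
  field_simp
end

section
/- For all real t with |t| < 1 and all complex z, cos(z·arctan(t))/(1+t²)^{z/2} = Σ_{k=0}^∞ (−1)^k (z)_{2k} t^{2k}/(2k)!, where (z)_n denotes the rising factorial. -/
/-!
Since `1 ± i t = √(1 + t²) · e^{± i arctan t}`, the average of `(1 + i t)^{-z}` and `(1 - i t)^{-z}`
is `cos (z arctan t) / (1 + t²)^{z/2}`. For `|t| < 1` both powers are given by the binomial series
`(1 + w)^{-z} = ∑ (-1)^n (z)_n wⁿ / n!` at `w = ± i t`, and averaging keeps exactly the even terms.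
-/

open Complex

theorem Ring.choose_neg_eq_ascPochhammer_eval {𝕂 : Type*} [Field 𝕂] [CharZero 𝕂] (a : 𝕂)
    (n : ℕ) : Ring.choose (-a) n = (-1) ^ n * (ascPochhammer 𝕂 n).eval a / n.factorial := by
  rw [Ring.choose_eq_smul, Polynomial.descPochhammer_smeval_eq_ascPochhammer,
    Polynomial.ascPochhammer_smeval_eq_eval, show -a - n + 1 = -(a + n - 1) by ring,
    ascPochhammer_eval_neg_eq_descPochhammer, descPochhammer_eval_eq_ascPochhammer,
    smul_eq_mul, show a + n - 1 - n + 1 = a by ring, inv_mul_eq_div]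

theorem Complex.hasSum_one_add_cpow_neg {a w : ℂ} (hw : ‖w‖ < 1) :
    HasSum (fun n ↦ (-1) ^ n * (ascPochhammer ℂ n).eval a / n.factorial * w ^ n)
      ((1 + w) ^ (-a)) := by
  have h := one_add_cpow_hasFPowerSeriesOnBall_zero (a := -a) |>.hasSum
    (y := w) (by simpa [← ofReal_norm] using hw)
  simpa only [binomialSeries_apply, List.ofFn_const, List.prod_replicate, smul_eq_mul,
    Ring.choose_neg_eq_ascPochhammer_eval, zero_add] using h

theorem HasSum.even_powers {𝕜 : Type*} [Field 𝕜] [CharZero 𝕜] [TopologicalSpace 𝕜]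
    [IsTopologicalRing 𝕜] {f : ℕ → 𝕜} {w S T : 𝕜} (hS : HasSum (fun n ↦ f n * w ^ n) S)
    (hT : HasSum (fun n ↦ f n * (-w) ^ n) T) :
    HasSum (fun k ↦ f (2 * k) * w ^ (2 * k)) ((S + T) / 2) := by
  have hodd : ∀ n ∉ Set.range (2 * ·), (f n * w ^ n + f n * (-w) ^ n) / 2 = 0 := by
    intro n hn
    have : Odd n := Nat.not_even_iff_odd.mp fun ⟨k, hk⟩ ↦ hn ⟨k, by simp only; omega⟩
    rw [this.neg_pow]
    ring
  have := ((mul_right_injective₀ two_ne_zero).hasSum_iff hodd).mpr ((hS.add hT).div_const 2)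
  refine this.congr_fun fun k ↦ ?_
  simp only [Function.comp_apply, (even_two_mul k).neg_pow]
  ring

theorem Complex.log_one_add_ofReal_mul_I (t : ℝ) :
    log (1 + t * I) = (Real.log (1 + t ^ 2) / 2 : ℝ) + Real.arctan t * I := by
  have h : (1 + t * I : ℂ) = exp ((Real.log (1 + t ^ 2) / 2 : ℝ) + Real.arctan t * I) := by
    rw [exp_add, ← ofReal_exp, Real.exp_half, Real.exp_log (by positivity), exp_mul_I,
      ← ofReal_cos, ← ofReal_sin, Real.cos_arctan, Real.sin_arctan]
    have : (Real.sqrt (1 + t ^ 2) : ℂ) ≠ 0 := by norm_cast; positivity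
    push_cast
    field_simp
  rw [h, log_exp] <;> simp only [add_im, ofReal_im, mul_im, ofReal_re, I_re, I_im] <;>
    linarith [Real.neg_pi_div_two_lt_arctan t, Real.arctan_lt_pi_div_two t, Real.pi_pos]

theorem Complex.cos_mul_arctan_div_cpow (t : ℝ) (z : ℂ) :
    cos (z * Real.arctan t) / ((1 + t ^ 2 : ℝ) : ℂ) ^ (z / 2) =
      ((1 + t * I) ^ (-z) + (1 - t * I) ^ (-z)) / 2 := by
  have hsub : (1 - t * I : ℂ) = 1 + ((-t : ℝ) : ℂ) * I := by push_cast; ring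
  have hne : ∀ s : ℝ, (1 + s * I : ℂ) ≠ 0 := fun s h ↦ by simpa using congrArg re h
  rw [hsub, cpow_def_of_ne_zero (hne t), cpow_def_of_ne_zero (hne (-t)),
    cpow_def_of_ne_zero (by exact_mod_cast (by positivity : (1 + t ^ 2 : ℝ) ≠ 0)),
    log_one_add_ofReal_mul_I, log_one_add_ofReal_mul_I, ← ofReal_log (by positivity),
    Real.arctan_neg, neg_sq, cos, div_eq_mul_inv _ (exp _), ← exp_neg]
  set L := Real.log (1 + t ^ 2)
  set A := Real.arctan t
  push_cast
  have hplus : exp ((L / 2 + A * I) * -z) = exp (-(z * A) * I) * exp (-(L * (z / 2))) := by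
    rw [← exp_add]; ring_nf
  have hminus : exp ((L / 2 + -A * I) * -z) = exp (z * A * I) * exp (-(L * (z / 2))) := by
    rw [← exp_add]; ring_nf
  linear_combination -(hplus + hminus) / 2

theorem cos_arctan_series (t : ℝ) (ht : |t| < 1) (z : ℂ) :
    Complex.cos (z * Real.arctan t) / ((1 + t ^ 2 : ℝ) : ℂ) ^ (z / 2) =
      ∑' k : ℕ, (-1) ^ k * (ascPochhammer ℂ (2 * k)).eval z * (t : ℂ) ^ (2 * k) /
        (Nat.factorial (2 * k) : ℂ) := by
  have hw : ‖(t : ℂ) * I‖ < 1 := by simpa using ht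
  have hS := (hasSum_one_add_cpow_neg hw).even_powers
    (hasSum_one_add_cpow_neg (a := z) (w := -(t * I)) (by rwa [norm_neg]))
  rw [← sub_eq_add_neg] at hS
  rw [cos_mul_arctan_div_cpow, ← hS.tsum_eq]
  congr 1 with k
  rw [mul_pow, pow_mul I, I_sq, (even_two_mul k).neg_one_pow]
  ring
end

section
/- For every natural number m ≥ 1 and every real t, cos(m·arctan(t)) = Σ_{p=0}^{⌊m/2⌋} (−1)^p (m/(m−p)) C(m−p, p) 2^{m−2p−1} (1+t²)^{p − m/2}. -/
/-!
Writing `θ = arctan t`, we have `cos (m θ) = T_m (cos θ)` for the Chebyshev polynomial `T_m`, and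
`cos θ = (1 + t²)^(-1/2)`. The claim is then the classical closed form
`T_m(x) = ∑_p (-1)^p a(m, p) (2x)^(m - 2p) / 2` with `a(m, p) = (m / (m - p)) C(m - p, p)`, which
follows from the recurrence `T_{m+2} = 2x T_{m+1} - T_m` because the coefficients satisfy the
Pascal-type rule `a(m + 2, q + 1) = a(m + 1, q + 1) + a(m, q)`.
-/

open Real Finset

namespace Polynomial.Chebyshev

variable {K : Type*} [Field K] [CharZero K]

-- For `m = p = 0` the quotient is `0 / 0 = 0`, while the constant coefficient of `T_0` is `1`:
-- the closed form below only holds for `m ≥ 1`.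
variable (K) in
noncomputable def tCoeff (m p : ℕ) : K := (m : K) / ((m : K) - p) * (m - p).choose p

theorem tCoeff_eq_zero {m p : ℕ} (h : m < 2 * p) : tCoeff K m p = 0 := by
  simp [tCoeff, Nat.choose_eq_zero_of_lt (show m - p < p by omega)]

theorem tCoeff_zero {m : ℕ} (hm : m ≠ 0) : tCoeff K m 0 = 1 := by
  simp [tCoeff, hm]

theorem tCoeff_add_two {m : ℕ} (hm : 1 ≤ m) (q : ℕ) :
    tCoeff K (m + 2) (q + 1) = tCoeff K (m + 1) (q + 1) + tCoeff K m q := by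
  rcases lt_or_ge m (2 * q) with hlt | hle
  · simp [tCoeff_eq_zero, hlt, show m + 2 < 2 * (q + 1) by omega,
      show m + 1 < 2 * (q + 1) by omega]
  have hcast : ((m - q : ℕ) : K) = m - q := Nat.cast_sub (by omega)
  have hd : (m : K) - q ≠ 0 := by rw [← hcast]; norm_cast; omega
  have hd1 : (m : K) + 2 - (q + 1) ≠ 0 := by
    rw [show (m : K) + 2 - (q + 1) = ((m - q : ℕ) : K) + 1 by rw [hcast]; ring]
    exact_mod_cast (m - q).succ_ne_zero
  have hchoose : ((m - q).choose (q + 1) : K) * (q + 1) = (m - q).choose q * (m - 2 * q) := by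
    have h := congrArg (Nat.cast (R := K)) (Nat.choose_succ_right_eq (m - q) q)
    push_cast [Nat.cast_sub (show q ≤ m - q by omega), hcast] at h
    linear_combination h
  rw [tCoeff, tCoeff, tCoeff, show m + 2 - (q + 1) = m - q + 1 by omega,
    show m + 1 - (q + 1) = m - q by omega, Nat.choose_succ_succ']
  push_cast
  rw [show (m : K) + 1 - (q + 1) = m - q by ring]
  field_simp
  linear_combination -hchoose

variable (K) in
noncomputable def tTerm (m p : ℕ) (x : K) : K :=
  (-1) ^ p * tCoeff K m p * (2 * x) ^ (m - 2 * p) / 2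

theorem tTerm_add_two_zero (m : ℕ) (x : K) : tTerm K (m + 2) 0 x = 2 * x * tTerm K (m + 1) 0 x := by
  simp only [tTerm, tCoeff_zero (Nat.succ_ne_zero _), pow_zero, mul_zero, Nat.sub_zero, pow_succ]
  ring

theorem tTerm_add_two {m q : ℕ} (hm : 1 ≤ m) (hq : 2 * q ≤ m) (x : K) :
    tTerm K (m + 2) (q + 1) x = 2 * x * tTerm K (m + 1) (q + 1) x - tTerm K m q x := by
  -- For `m = 2q` the exponent `m + 1 - 2 (q + 1)` truncates to `0`, but then the coefficient vanishes.
  have hpow : tCoeff K (m + 1) (q + 1) * (2 * x) ^ (m - 2 * q) =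
      tCoeff K (m + 1) (q + 1) * (2 * x * (2 * x) ^ (m + 1 - 2 * (q + 1))) := by
    rcases hq.lt_or_eq with hlt | rfl
    · rw [← pow_succ', show m + 1 - 2 * (q + 1) + 1 = m - 2 * q by omega]
    · rw [tCoeff_eq_zero (by omega), zero_mul, zero_mul]
  rw [tTerm, tTerm, tTerm, show m + 2 - 2 * (q + 1) = m - 2 * q by omega, tCoeff_add_two hm]
  linear_combination (-1) ^ (q + 1) / 2 * hpow

theorem sum_range_tTerm_of_le {m n : ℕ} (h : m / 2 + 1 ≤ n) (x : K) :
    ∑ p ∈ range n, tTerm K m p x = ∑ p ∈ range (m / 2 + 1), tTerm K m p x := by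
  refine (sum_subset (range_subset_range.mpr h) fun p _ hp ↦ ?_).symm
  rw [mem_range, not_lt] at hp
  simp [tTerm, tCoeff_eq_zero (show m < 2 * p by omega)]

theorem sum_tTerm_add_two {m : ℕ} (hm : 1 ≤ m) (x : K) :
    ∑ p ∈ range ((m + 2) / 2 + 1), tTerm K (m + 2) p x =
      2 * x * ∑ p ∈ range ((m + 1) / 2 + 1), tTerm K (m + 1) p x -
        ∑ p ∈ range (m / 2 + 1), tTerm K m p x := by
  have h₂ : ∑ p ∈ range ((m + 2) / 2 + 1), tTerm K (m + 2) p x =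
      ∑ q ∈ range (m / 2 + 1), tTerm K (m + 2) (q + 1) x + tTerm K (m + 2) 0 x := by
    rw [show (m + 2) / 2 + 1 = m / 2 + 1 + 1 by omega, sum_range_succ']
  have h₁ : ∑ p ∈ range ((m + 1) / 2 + 1), tTerm K (m + 1) p x =
      ∑ q ∈ range (m / 2 + 1), tTerm K (m + 1) (q + 1) x + tTerm K (m + 1) 0 x := by
    rw [← sum_range_tTerm_of_le (n := m / 2 + 1 + 1) (by omega), sum_range_succ']
  rw [h₂, h₁, sum_congr rfl fun q hq ↦ tTerm_add_two hm (by rw [mem_range] at hq; omega) x,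
    sum_sub_distrib, tTerm_add_two_zero, mul_add, mul_sum]
  ring

theorem T_eval_eq_sum_tTerm {m : ℕ} (hm : 1 ≤ m) (x : K) :
    (T K m).eval x = ∑ p ∈ range (m / 2 + 1), tTerm K m p x := by
  obtain ⟨n, rfl⟩ : ∃ n, m = n + 1 := ⟨m - 1, by omega⟩
  clear hm
  induction n using Nat.twoStepInduction with
  | zero => simp [tTerm, tCoeff_zero]
  | one => simp [tTerm, tCoeff, sum_range_succ, T_two]; ring
  | more n ih₁ ih₂ =>
    have hcast : ((n + 2 + 1 : ℕ) : ℤ) = ((n + 1 + 1 : ℕ) : ℤ) + 1 := by push_cast; ring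
    rw [hcast, T_add_one, eval_sub, eval_mul, eval_mul, eval_X, eval_ofNat, ih₂,
      show ((n + 1 + 1 : ℕ) : ℤ) - 1 = ((n + 1 : ℕ) : ℤ) by push_cast; ring, ih₁]
    exact (sum_tTerm_add_two (m := n + 1) (by omega) x).symm

end Polynomial.Chebyshev

theorem Real.two_div_sqrt_pow_div_two {s : ℝ} (hs : 0 ≤ s) (n : ℕ) :
    (2 / √s) ^ n / 2 = (2 : ℝ) ^ ((n : ℝ) - 1) * s ^ (-(n : ℝ) / 2) := by
  rw [div_pow, sqrt_eq_rpow, ← rpow_natCast (s ^ _), ← rpow_mul hs, rpow_sub two_pos, rpow_one,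
    rpow_natCast, neg_div, rpow_neg hs]
  ring_nf

open Polynomial.Chebyshev

theorem cos_nat_mul_arctan_alt (m : ℕ) (hm : 1 ≤ m) (t : ℝ) :
    Real.cos (m * Real.arctan t) =
      ∑ p ∈ Finset.range (m / 2 + 1),
        (-1 : ℝ) ^ p * ((m : ℝ) / ((m : ℝ) - p)) * ((m - p).choose p) *
          (2 : ℝ) ^ ((m : ℝ) - 2 * p - 1) * (1 + t ^ 2) ^ ((p : ℝ) - (m : ℝ) / 2) := by
  have hcos : cos (m * arctan t) = (T ℝ m).eval (cos (arctan t)) := by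
    rw [T_real_cos, Int.cast_natCast]
  rw [hcos, T_eval_eq_sum_tTerm hm]
  refine sum_congr rfl fun p hp ↦ ?_
  have hp : 2 * p ≤ m := by rw [mem_range] at hp; omega
  rw [tTerm, tCoeff, cos_arctan, mul_one_div, mul_div_assoc, two_div_sqrt_pow_div_two (by positivity)]
  push_cast [Nat.cast_sub hp]
  ring_nf
end

section
/- For every natural number m ≥ 1 and every real t, sin(m·arctan(t)) = t · Σ_{p=0}^{⌊(m−1)/2⌋} (−1)^p C(m−p−1, p) 2^{m−2p−1} (1+t²)^{p − m/2}. -/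
open Real Finset

/-!
Put `θ = arctan t`, so that `cos θ = (1 + t²)^(-1/2)` and `sin θ = t cos θ`. Then
`sin ((n + 1) θ) = sin θ · U_n (cos θ)` for the Chebyshev polynomial `U_n` of the second kind, and
the sum is the classical expansion `U_n(x) = ∑ₚ (-1)ᵖ C(n - p, p) (2x)^(n - 2p)`, which satisfies the
recurrence `U_{n+2} = 2x U_{n+1} - U_n` term by term thanks to Pascal's rule.
-/

namespace Polynomial.Chebyshev

variable {R : Type*} [CommRing R]

theorem neg_one_pow_mul_choose_mul_pow_add_two (y : R) (n p : ℕ) :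
    (-1) ^ (p + 1) * ((n + 2 - (p + 1)).choose (p + 1) : R) * y ^ (n + 2 - 2 * (p + 1)) =
      y * ((-1) ^ (p + 1) * ((n + 1 - (p + 1)).choose (p + 1) : R) * y ^ (n + 1 - 2 * (p + 1))) -
        (-1) ^ p * ((n - p).choose p : R) * y ^ (n - 2 * p) := by
  rcases lt_or_ge n (2 * p) with hn | hn
  · rw [Nat.choose_eq_zero_of_lt (by omega : n + 2 - (p + 1) < p + 1),
      Nat.choose_eq_zero_of_lt (by omega : n + 1 - (p + 1) < p + 1),
      Nat.choose_eq_zero_of_lt (by omega : n - p < p)]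
    simp
  obtain ⟨k, rfl⟩ := Nat.exists_eq_add_of_le hn
  rw [show 2 * p + k + 2 - (p + 1) = p + k + 1 by omega, show 2 * p + k + 1 - (p + 1) = p + k by omega,
    show 2 * p + k - p = p + k by omega, Nat.choose_succ_succ', show 2 * p + k + 2 - 2 * (p + 1) = k by omega,
    show 2 * p + k + 1 - 2 * (p + 1) = k - 1 by omega, show 2 * p + k - 2 * p = k by omega]
  rcases k with _ | k
  · simp [pow_succ]
  · push_cast
    ring

variable (R)

theorem U_natCast_eq_sum (n : ℕ) {N : ℕ} (hN : n < 2 * N) :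
    U R n = ∑ p ∈ range N, (-1) ^ p * ((n - p).choose p : R[X]) * (2 * X) ^ (n - 2 * p) := by
  induction n using Nat.twoStepInduction generalizing N with
  | zero | one =>
    obtain ⟨M, rfl⟩ : ∃ M, N = M + 1 := Nat.exists_eq_succ_of_ne_zero (by omega)
    simp [sum_range_succ']
  | more n ih ih' =>
    obtain ⟨M, rfl⟩ : ∃ M, N = M + 1 := Nat.exists_eq_succ_of_ne_zero (by omega)
    push_cast at ih ih' ⊢
    rw [U_add_two, ih (N := M) (by omega), ih' (N := M + 1) (by omega), sum_range_succ' _ M,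
      sum_range_succ' _ M]
    simp only [neg_one_pow_mul_choose_mul_pow_add_two, sum_sub_distrib, ← mul_sum]
    simp only [Nat.reduceSubDiff, pow_zero, tsub_zero, Nat.choose_zero_right, Nat.cast_one, mul_one,
      mul_zero, one_mul]
    ring

end Polynomial.Chebyshev

namespace Real

theorem cos_arctan_eq_rpow (t : ℝ) : cos (arctan t) = (1 + t ^ 2) ^ (-(1 / 2) : ℝ) := by
  rw [cos_arctan, sqrt_eq_rpow, rpow_neg (by positivity), one_div]

theorem rpow_natCast_sub_half {a : ℝ} (ha : 0 ≤ a) {p m : ℕ} (h : 2 * p ≤ m) :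
    a ^ ((p : ℝ) - m / 2) = (a ^ (-(1 / 2) : ℝ)) ^ (m - 2 * p) := by
  rw [← rpow_natCast, ← rpow_mul ha, Nat.cast_sub h]
  push_cast
  ring_nf

end Real

open Polynomial Polynomial.Chebyshev in
theorem sin_nat_mul_arctan_alt (m : ℕ) (hm : 1 ≤ m) (t : ℝ) :
    Real.sin (m * Real.arctan t) =
      t * ∑ p ∈ Finset.range ((m - 1) / 2 + 1),
        (-1 : ℝ) ^ p * ((m - p - 1).choose p) *
          (2 : ℝ) ^ ((m : ℝ) - 2 * p - 1) * (1 + t ^ 2) ^ ((p : ℝ) - (m : ℝ) / 2) := by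
  obtain ⟨n, rfl⟩ : ∃ n, m = n + 1 := ⟨m - 1, by omega⟩
  have hsin : sin (arctan t) = t * cos (arctan t) := by rw [sin_arctan, cos_arctan]; ring
  have hU : sin ((n + 1 : ℕ) * arctan t) = sin (arctan t) * (U ℝ n).eval (cos (arctan t)) := by
    rw [mul_comm (sin _), U_real_cos]; push_cast; rfl
  rw [hU, hsin, U_natCast_eq_sum ℝ n (N := (n + 1 - 1) / 2 + 1) (by omega), eval_finsetSum,
    mul_assoc, mul_sum, mul_sum, mul_sum]
  refine sum_congr rfl fun p hpN => ?_
  have hp : 2 * p ≤ n := by rw [mem_range] at hpN; omega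
  rw [rpow_natCast_sub_half (by positivity) (by omega), ← cos_arctan_eq_rpow,
    show (n + 1 : ℕ) - 2 * p = n - 2 * p + 1 by omega, show n + 1 - p - 1 = n - p by omega,
    show ((n + 1 : ℕ) : ℝ) - 2 * p - 1 = (n - 2 * p : ℕ) by push_cast [Nat.cast_sub hp]; ring, rpow_natCast]
  simp only [eval_mul, eval_pow, eval_neg, eval_one, eval_natCast, eval_ofNat, eval_X]
  ring
end

section
/- For natural numbers m ≥ 1 and j with 0 ≤ j ≤ ⌊(m−1)/2⌋, one has Σ_{k=j}^{⌊(m−1)/2⌋} C(m, 2k+1) C(k, j) = C(m−j−1, j) · 2^{m−2j−1}. -/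
/-!
Write `f m j = ∑ₖ C(m, 2k+1) C(k, j)`. Splitting `C(m+2, 2k+1)` twice by Pascal's rule (and
`C(k+1, j+1)` once) gives the Lucas-type recurrence `f (m+2) (j+1) = 2 f (m+1) (j+1) + f m j`,
together with `f (m+2) 0 = 2 f (m+1) 0`. Writing `m = 2j + d + 1`, the closed form
`C(j+d, j) 2^d` satisfies the same recurrence, again by Pascal's rule, and the same initial values.
-/

open Finset

def oddChooseSum (m j : ℕ) : ℕ := ∑ k ∈ range (m + 1), m.choose (2 * k + 1) * k.choose j

def evenChooseSum (m j : ℕ) : ℕ := ∑ k ∈ range (m + 1), m.choose (2 * k) * k.choose j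

lemma sum_range_succ_choose_odd_mul (m : ℕ) (g : ℕ → ℕ) :
    ∑ k ∈ range (m + 2), (m + 1).choose (2 * k + 1) * g k =
      ∑ k ∈ range (m + 1), m.choose (2 * k) * g k +
        ∑ k ∈ range (m + 1), m.choose (2 * k + 1) * g k := by
  simp only [Nat.choose_succ_succ', add_mul, sum_add_distrib]
  rw [sum_range_succ _ (m + 1), sum_range_succ _ (m + 1),
    Nat.choose_eq_zero_of_lt (by omega : m < 2 * (m + 1)),
    Nat.choose_eq_zero_of_lt (by omega : m < 2 * (m + 1) + 1)]
  simp

lemma sum_range_succ_choose_even_mul (m : ℕ) (g : ℕ → ℕ) :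
    ∑ k ∈ range (m + 2), (m + 1).choose (2 * k) * g k =
      ∑ k ∈ range (m + 1), m.choose (2 * k) * g k +
        ∑ k ∈ range (m + 1), m.choose (2 * k + 1) * g (k + 1) := by
  have cut : ∑ k ∈ range (m + 2), m.choose (2 * k) * g k =
      ∑ k ∈ range (m + 1), m.choose (2 * k) * g k := by
    rw [sum_range_succ, Nat.choose_eq_zero_of_lt (by omega : m < 2 * (m + 1)), zero_mul, add_zero]
  rw [← cut, sum_range_succ', sum_range_succ' _ (m + 1)]
  have pascal (k : ℕ) :
      (m + 1).choose (2 * (k + 1)) = m.choose (2 * k + 1) + m.choose (2 * (k + 1)) :=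
    Nat.choose_succ_succ' m (2 * k + 1)
  simp only [pascal, add_mul, sum_add_distrib, mul_zero, Nat.choose_zero_right]
  ring

lemma oddChooseSum_succ (m j : ℕ) :
    oddChooseSum (m + 1) j = evenChooseSum m j + oddChooseSum m j :=
  sum_range_succ_choose_odd_mul m _

lemma evenChooseSum_succ_zero (m : ℕ) :
    evenChooseSum (m + 1) 0 = evenChooseSum m 0 + oddChooseSum m 0 := by
  simpa [evenChooseSum, oddChooseSum] using sum_range_succ_choose_even_mul m 1

lemma evenChooseSum_succ_succ (m j : ℕ) :
    evenChooseSum (m + 1) (j + 1) =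
      evenChooseSum m (j + 1) + oddChooseSum m j + oddChooseSum m (j + 1) := by
  rw [evenChooseSum, sum_range_succ_choose_even_mul]
  simp only [Nat.choose_succ_succ', mul_add, sum_add_distrib, evenChooseSum, oddChooseSum,
    add_assoc]

lemma oddChooseSum_add_two_zero (m : ℕ) :
    oddChooseSum (m + 2) 0 = 2 * oddChooseSum (m + 1) 0 := by
  rw [oddChooseSum_succ (m + 1), evenChooseSum_succ_zero, ← oddChooseSum_succ]
  ring

lemma oddChooseSum_add_two_succ (m j : ℕ) :
    oddChooseSum (m + 2) (j + 1) = 2 * oddChooseSum (m + 1) (j + 1) + oddChooseSum m j := by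
  rw [oddChooseSum_succ (m + 1), evenChooseSum_succ_succ, oddChooseSum_succ m (j + 1)]
  ring

lemma oddChooseSum_succ_zero (d : ℕ) : oddChooseSum (d + 1) 0 = 2 ^ d := by
  induction d with
  | zero => rfl
  | succ d ih => rw [oddChooseSum_add_two_zero, ih, pow_succ, mul_comm]

lemma sum_Icc_eq_oddChooseSum (m j : ℕ) :
    ∑ k ∈ Icc j ((m - 1) / 2), m.choose (2 * k + 1) * k.choose j = oddChooseSum m j := by
  refine sum_subset (fun k hk ↦ ?_) (fun k _ hk ↦ ?_)
  · simp only [mem_Icc] at hk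
    simp only [mem_range]
    omega
  · simp only [mem_Icc, not_and_or, not_le] at hk
    rcases hk with hk | hk
    · rw [Nat.choose_eq_zero_of_lt hk, mul_zero]
    · rw [Nat.choose_eq_zero_of_lt (by omega : m < 2 * k + 1), zero_mul]

lemma oddChooseSum_eq_zero_of_le {m j : ℕ} (h : m ≤ 2 * j) : oddChooseSum m j = 0 := by
  refine sum_eq_zero fun k _ ↦ ?_
  rcases lt_or_ge k j with hk | hk
  · rw [Nat.choose_eq_zero_of_lt hk, mul_zero]
  · rw [Nat.choose_eq_zero_of_lt (by omega : m < 2 * k + 1), zero_mul]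

lemma oddChooseSum_two_mul_add_succ (j d : ℕ) :
    oddChooseSum (2 * j + d + 1) j = (j + d).choose j * 2 ^ d := by
  induction j generalizing d with
  | zero => simpa using oddChooseSum_succ_zero d
  | succ j ihj =>
    induction d with
    | zero =>
      rw [show 2 * (j + 1) + 0 + 1 = 2 * j + 1 + 2 by ring, oddChooseSum_add_two_succ,
        oddChooseSum_eq_zero_of_le (by omega)]
      simpa using ihj 0
    | succ d ihd =>
      rw [show 2 * (j + 1) + (d + 1) + 1 = 2 * j + (d + 1) + 1 + 2 by ring,
        oddChooseSum_add_two_succ, show 2 * j + (d + 1) + 1 + 1 = 2 * (j + 1) + d + 1 by ring,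
        ihd, ihj, show j + 1 + d = j + (d + 1) by ring, add_right_comm j 1, Nat.choose_succ_succ']
      ring

theorem choose_sum_identity (m j : ℕ) (hm : 1 ≤ m) (hj : j ≤ (m - 1) / 2) :
    ∑ k ∈ Finset.Icc j ((m - 1) / 2), m.choose (2 * k + 1) * k.choose j =
      (m - j - 1).choose j * 2 ^ (m - 2 * j - 1) := by
  obtain ⟨d, rfl⟩ : ∃ d, m = 2 * j + d + 1 := ⟨m - 2 * j - 1, by omega⟩
  rw [sum_Icc_eq_oddChooseSum, oddChooseSum_two_mul_add_succ]
  congr 3 <;> omega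
end

section
/- For natural numbers k ≥ 1 and p with 1 ≤ p ≤ k, Σ_{j=1}^{k} (−1)^j j C(2k−j−1, k−j) C(p, j−p) equals (−1)^k k if p = k, and equals 0 if p < k. -/
open Finset

/-!
Write `k = p + m` and `j = p + i`. Splitting the factor `p + i` and absorbing
`i * C(p, i) = p * C(p - 1, i - 1)`, the sum for `m ≥ 1` becomes
`(-1)^p * p * (C(2m-1, m) - C(2m-1, m-1)) = 0`, since both inner sums are instances of
`∑ᵢ (-1)^i C(q, i) C(q + s + r - i, r - i) = C(s + r, r)`. This is Chu–Vandermonde for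
`C(q - (q + s + 1), r)`, expanded with the negative binomial coefficients
`C(-(s + 1), j) = (-1)^j C(s + j, j)`.
-/

lemma Ring.choose_neg_natCast_succ (s j : ℕ) :
    Ring.choose (-((s + 1 : ℕ) : ℤ)) j = (-1) ^ j * ((s + j).choose j : ℤ) := by
  rw [Ring.choose_neg, Units.smul_def, Int.negOnePow_def, zsmul_eq_mul,
    show ((s + 1 : ℕ) : ℤ) + j - 1 = ((s + j : ℕ) : ℤ) by push_cast; ring,
    Ring.choose_natCast]
  norm_cast

lemma sum_range_neg_one_pow_mul_choose_mul_choose (q s r : ℕ) :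
    ∑ i ∈ range (r + 1), (-1 : ℤ) ^ i * q.choose i * (q + s + r - i).choose (r - i) =
      (s + r).choose r := by
  have hv :=
    Ring.add_choose_eq (r := (q : ℤ)) (s := -((q + s + 1 : ℕ) : ℤ)) r (Commute.all _ _)
  rw [show (q : ℤ) + -((q + s + 1 : ℕ) : ℤ) = -((s + 1 : ℕ) : ℤ) by push_cast; ring,
    Ring.choose_neg_natCast_succ, Nat.sum_antidiagonal_eq_sum_range_succ_mk] at hv
  simp only [Ring.choose_natCast, Ring.choose_neg_natCast_succ] at hv
  calc _ = (-1) ^ r * ∑ i ∈ range (r + 1),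
        (q.choose i : ℤ) * ((-1) ^ (r - i) * ((q + s + (r - i)).choose (r - i) : ℤ)) := by
        rw [mul_sum]
        refine sum_congr rfl fun i hi => ?_
        obtain ⟨t, rfl⟩ := Nat.exists_eq_add_of_le (Nat.lt_succ_iff.mp (mem_range.mp hi))
        rw [Nat.add_sub_cancel_left, show q + s + (i + t) - i = q + s + t by omega]
        linear_combination -(-1 : ℤ) ^ i * q.choose i * (q + s + t).choose t *
          (Even.neg_one_pow (α := ℤ) (even_two_mul t))
    _ = _ := by rw [← hv, ← mul_assoc, ← pow_add, Even.neg_one_pow ⟨r, rfl⟩, one_mul]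

lemma sum_range_neg_one_pow_mul_mul_choose_mul_choose (q s r : ℕ) :
    ∑ i ∈ range (r + 2),
        (-1 : ℤ) ^ i * i * (q + 1).choose i * (q + s + r + 1 - i).choose (r + 1 - i) =
      -(q + 1) * (s + r).choose r := by
  rw [sum_range_succ', ← sum_range_neg_one_pow_mul_choose_mul_choose q s r, mul_sum]
  simp only [CharP.cast_eq_zero, mul_zero, zero_mul, add_zero]
  refine sum_congr rfl fun i _ => ?_
  have habsorb : ((i + 1 : ℕ) : ℤ) * (q + 1).choose (i + 1) = (q + 1) * q.choose i := by
    rw [mul_comm]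
    exact_mod_cast (Nat.add_one_mul_choose_eq q i).symm
  rw [show q + s + r + 1 - (i + 1) = q + s + r - i by omega, Nat.add_sub_add_right]
  linear_combination (-(-1 : ℤ) ^ i) * ((q + s + r - i).choose (r - i) : ℤ) * habsorb

lemma sum_Icc_mul_choose_sub_eq_sum_range {p : ℕ} (hp : 1 ≤ p) (m : ℕ) (f : ℕ → ℤ) :
    ∑ j ∈ Icc 1 (p + m), f j * (if j < p then 0 else (p.choose (j - p) : ℤ)) =
      ∑ i ∈ range (m + 1), f (p + i) * p.choose i := by
  rw [← sum_subset (Icc_subset_Icc_left hp) fun j hj hjp => by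
    simp only [mem_Icc] at hj hjp
    simp [show j < p by omega]]
  rw [← Ico_add_one_right_eq_Icc, sum_Ico_eq_sum_range, show p + m + 1 - p = m + 1 by omega]
  simp

theorem choose_orthogonality_general (k p : ℕ) (hp1 : 1 ≤ p) (hpk : p ≤ k) :
    (∑ j ∈ Finset.Icc 1 k, (-1 : ℤ) ^ j * j * ((2 * k - j - 1).choose (k - j)) *
        (if j < p then 0 else (p.choose (j - p) : ℤ))) =
      if p = k then (-1 : ℤ) ^ k * k else 0 := by
  obtain ⟨m, rfl⟩ := Nat.exists_eq_add_of_le hpk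
  rw [sum_Icc_mul_choose_sub_eq_sum_range hp1]
  rcases m with _ | m
  · simp
  obtain ⟨q, rfl⟩ := Nat.exists_eq_add_of_le' hp1
  rw [if_neg (by omega)]
  calc _ = (-1) ^ (q + 1) * ((q + 1) * ∑ i ∈ range (m + 2),
          (-1 : ℤ) ^ i * (q + 1).choose i * (q + 1 + m + (m + 1) - i).choose (m + 1 - i) +
        ∑ i ∈ range (m + 2), (-1 : ℤ) ^ i * i * (q + 1).choose i *
          (q + (m + 1) + m + 1 - i).choose (m + 1 - i)) := by
        simp only [mul_sum, ← sum_add_distrib]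
        refine sum_congr rfl fun i _ => ?_
        rw [show 2 * (q + 1 + (m + 1)) - (q + 1 + i) - 1 = q + 1 + m + (m + 1) - i by omega,
          show q + (m + 1) + m + 1 - i = q + 1 + m + (m + 1) - i by omega,
          show q + 1 + (m + 1) - (q + 1 + i) = m + 1 - i by omega]
        push_cast
        ring
    _ = 0 := by
        rw [sum_range_neg_one_pow_mul_choose_mul_choose,
          sum_range_neg_one_pow_mul_mul_choose_mul_choose,
          show m + 1 + m = 2 * m + 1 by ring, show m + (m + 1) = 2 * m + 1 by ring,
          Nat.choose_symm_half]
        ring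

theorem choose_orthogonality (k p : ℕ) (hk : 1 ≤ k) (hp1 : 1 ≤ p) (hpk : p ≤ k) :
    (∑ j ∈ Finset.Icc 1 k, (-1 : ℤ) ^ j * j * ((2 * k - j - 1).choose (k - j)) *
        (if j < p then 0 else (p.choose (j - p) : ℤ))) =
      if p = k then (-1 : ℤ) ^ k * k else 0 :=
  choose_orthogonality_general k p hp1 hpk
end

section
/- For every natural number k ≥ 1, Σ_{j=1}^{k} 2^j C(2k−j−1, k−j) = 2^{2k−1}. -/
/-!
Substituting `i = k - j` turns the sum into `2 * ∑_{i ≤ n} C(n + i, i) 2^(n - i)` with `n = k - 1`.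
As `m` increases, both `∑_{i ≤ m} C(n + i, i) 2^(m - i)` and `∑_{j ≤ m} C(n + m + 1, j)` double and
gain the term `C(n + m + 1, m + 1)` (the latter by Pascal's rule), so they agree; at `m = n` the
second sum is half of `2^(2n + 1)`.
-/

open Finset

namespace Nat

theorem sum_range_choose_succ (N m : ℕ) :
    ∑ j ∈ range (m + 1), (N + 1).choose j = 2 * ∑ j ∈ range m, N.choose j + N.choose m := by
  induction m with
  | zero => simp
  | succ m ih =>
    rw [sum_range_succ, ih, choose_succ_succ', sum_range_succ]
    ring

theorem sum_range_choose_add_mul_two_pow (n m : ℕ) :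
    ∑ i ∈ range (m + 1), (n + i).choose i * 2 ^ (m - i) =
      ∑ j ∈ range (m + 1), (n + m + 1).choose j := by
  induction m with
  | zero => simp
  | succ m ih =>
    have doubled : ∑ i ∈ range (m + 1), (n + i).choose i * 2 ^ (m + 1 - i) =
        2 * ∑ i ∈ range (m + 1), (n + i).choose i * 2 ^ (m - i) := by
      rw [mul_sum]
      refine sum_congr rfl fun i hi => ?_
      rw [show m + 1 - i = m - i + 1 by have := mem_range.mp hi; omega, pow_succ]
      ring
    rw [sum_range_succ, doubled, ih, ← add_assoc n m 1, sum_range_choose_succ (n + m + 1) (m + 1),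
      Nat.sub_self, pow_zero, mul_one]

theorem sum_range_choose_add_mul_two_pow_self (n : ℕ) :
    ∑ i ∈ range (n + 1), (n + i).choose i * 2 ^ (n - i) = 4 ^ n := by
  rw [sum_range_choose_add_mul_two_pow, ← two_mul, sum_range_choose_halfway]

end Nat

theorem choose_sum_pow (k : ℕ) (hk : 1 ≤ k) :
    ∑ j ∈ Finset.Icc 1 k, 2 ^ j * (2 * k - j - 1).choose (k - j) = 2 ^ (2 * k - 1) := by
  obtain ⟨n, rfl⟩ := Nat.exists_eq_add_of_le' hk
  have reflect : ∑ j ∈ Icc 1 (n + 1), 2 ^ j * (2 * (n + 1) - j - 1).choose (n + 1 - j) =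
      ∑ i ∈ range (n + 1), 2 * ((n + i).choose i * 2 ^ (n - i)) := by
    refine sum_nbij' (fun j => n + 1 - j) (fun i => n + 1 - i) ?_ ?_ ?_ ?_ ?_
    iterate 4 · intro x hx; simp only [mem_Icc, mem_range] at hx ⊢; omega
    · intro j hj
      obtain ⟨hj₁, hj₂⟩ := mem_Icc.mp hj
      obtain ⟨i, rfl⟩ := Nat.exists_eq_add_of_le' hj₁
      rw [show 2 * (n + 1) - (i + 1) - 1 = n + (n - i) by omega,
        show n + 1 - (i + 1) = n - i by omega, Nat.sub_sub_self (by omega), pow_succ]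
      ring
  rw [reflect, ← mul_sum, Nat.sum_range_choose_add_mul_two_pow_self,
    show 2 * (n + 1) - 1 = 2 * n + 1 by omega, pow_succ, pow_mul]
  ring
end

section
/- For every natural number k ≥ 1, Σ_{j=1}^{k} j · 2^j C(2k−j−1, k−j) = k · C(2k, k). -/
/-!
Put `R(m) = 2 (k - m) 2^m C(2k-m-1, k-m)`. The identity
`(2k-m-1) C(2k-m-2, k-m-1) = (k-m) C(2k-m-1, k-m)` shows that the `(m+1)`-st summand is exactly
`R(m) - R(m+1)`, so the sum telescopes to `R(0) - R(k) = 2k C(2k-1, k) = k C(2k, k)`.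
-/

open Finset

namespace Nat

def weightedChooseTail (k m : ℕ) : ℕ :=
  2 * (k - m) * 2 ^ m * (2 * k - m - 1).choose (k - m)

theorem two_mul_mul_choose_two_mul_sub_one (k : ℕ) :
    2 * k * (2 * k - 1).choose k = k * (2 * k).choose k := by
  rcases k with _ | n
  · simp
  · rw [show 2 * (n + 1) - 1 = 2 * n + 1 by omega, choose_symm_half,
      show 2 * (n + 1) = 2 * n + 1 + 1 by omega]
    have h := add_one_mul_choose_eq (2 * n + 1) n
    rw [show 2 * n + 1 + 1 = 2 * (n + 1) by omega] at h ⊢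
    linarith

theorem weightedChooseTail_zero (k : ℕ) : weightedChooseTail k 0 = k * (2 * k).choose k := by
  simpa [weightedChooseTail] using two_mul_mul_choose_two_mul_sub_one k

theorem weightedChooseTail_self (k : ℕ) : weightedChooseTail k k = 0 := by
  simp [weightedChooseTail]

theorem add_one_mul_two_pow_mul_choose_add_tail (m d : ℕ) :
    (m + 1) * 2 ^ (m + 1) * (m + 2 * d).choose d + 2 * d * 2 ^ (m + 1) * (m + 2 * d).choose d =
      2 * (d + 1) * 2 ^ m * (m + 2 * d + 1).choose (d + 1) := by
  have h := add_one_mul_choose_eq (m + 2 * d) d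
  calc _ = 2 ^ (m + 1) * ((m + 2 * d + 1) * (m + 2 * d).choose d) := by ring
    _ = _ := by rw [h]; ring

theorem weightedChooseTail_eq_add {k m : ℕ} (hm : m < k) :
    weightedChooseTail k m =
      (m + 1) * 2 ^ (m + 1) * (2 * k - (m + 1) - 1).choose (k - (m + 1)) +
        weightedChooseTail k (m + 1) := by
  obtain ⟨d, rfl⟩ : ∃ d, k = m + 1 + d := ⟨k - (m + 1), by omega⟩
  unfold weightedChooseTail
  rw [show m + 1 + d - m = d + 1 by omega, show 2 * (m + 1 + d) - m - 1 = m + 2 * d + 1 by omega,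
    show 2 * (m + 1 + d) - (m + 1) - 1 = m + 2 * d by omega, show m + 1 + d - (m + 1) = d by omega,
    ← add_one_mul_two_pow_mul_choose_add_tail]

theorem sum_Icc_add_weightedChooseTail {k m : ℕ} (hm : m ≤ k) :
    ∑ j ∈ Icc 1 m, j * 2 ^ j * (2 * k - j - 1).choose (k - j) + weightedChooseTail k m =
      weightedChooseTail k 0 := by
  induction m with
  | zero => simp
  | succ m ih =>
    rw [sum_Icc_succ_top (by omega), ← ih (by omega), weightedChooseTail_eq_add (m := m) (by omega),
      add_assoc]

end Nat

theorem choose_sum_pow_weighted_general (k : ℕ) :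
    ∑ j ∈ Finset.Icc 1 k, j * 2 ^ j * (2 * k - j - 1).choose (k - j) =
      k * (2 * k).choose k := by
  simpa [Nat.weightedChooseTail_self, Nat.weightedChooseTail_zero] using
    Nat.sum_Icc_add_weightedChooseTail (le_refl k)

theorem choose_sum_pow_weighted (k : ℕ) (hk : 1 ≤ k) :
    ∑ j ∈ Finset.Icc 1 k, j * 2 ^ j * (2 * k - j - 1).choose (k - j) =
      k * (2 * k).choose k :=
  choose_sum_pow_weighted_general k
end

section
/- For every real q > 0 and every natural number k ≥ 0, ∫_0^∞ t^{2k+1}/(e^{2πqt} − 1) dt = (−1)^k B_{2k+2} / (4(k+1) q^{2k+2}). -/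
/-!
Expanding `1 / (e^x - 1) = ∑ₙ e^{-(n+1)x}` and integrating term by term against `t^{s-1}`
gives the Bose integral `∫₀^∞ t^{s-1} / (e^{at} - 1) dt = Γ(s) ζ(s) / a^s`. For `s = 2k + 2`
and `a = 2πq`, Euler's evaluation of `ζ(2k + 2)` in terms of `B_{2k+2}` gives the formula.
-/

open Real MeasureTheory Set
open scoped Nat

lemma hasSum_exp_neg_nat_add_one_mul {x : ℝ} (hx : 0 < x) :
    HasSum (fun n : ℕ ↦ exp (-((n + 1) * x))) (1 / (exp x - 1)) := by
  have hr : exp (-x) < 1 := exp_lt_one_iff.mpr (neg_neg_of_pos hx)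
  have hsum : exp (-x) * (1 - exp (-x))⁻¹ = 1 / (exp x - 1) := by
    rw [exp_neg]
    field_simp
  rw [← hsum]
  refine ((hasSum_geometric_of_lt_one (exp_pos _).le hr).mul_left (exp (-x))).congr_fun fun n ↦ ?_
  rw [← exp_nat_mul, ← exp_add]
  ring_nf

lemma integrableOn_rpow_mul_exp_neg_mul {s b : ℝ} (hs : 0 < s) (hb : 0 < b) :
    IntegrableOn (fun t ↦ t ^ (s - 1) * exp (-(b * t))) (Ioi 0) := by
  simpa using integrableOn_rpow_mul_exp_neg_mul_rpow (p := 1) (s := s - 1) (by linarith) one_pos hb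

lemma tsum_one_div_nat_add_one_pow_two_mul {k : ℕ} (hk : k ≠ 0) :
    ∑' n : ℕ, 1 / ((n : ℝ) + 1) ^ (2 * k) =
      (-1) ^ (k + 1) * 2 ^ (2 * k - 1) * π ^ (2 * k) * bernoulli (2 * k) / (2 * k)! := by
  rw [← (hasSum_zeta_nat hk).tsum_eq, (hasSum_zeta_nat hk).summable.tsum_eq_zero_add]
  simp [hk]

theorem integral_rpow_div_exp_sub_one {s a : ℝ} (hs : 1 < s) (ha : 0 < a) :
    ∫ t in Ioi 0, t ^ (s - 1) / (exp (a * t) - 1) =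
      Gamma s / a ^ s * ∑' n : ℕ, 1 / ((n : ℝ) + 1) ^ s := by
  set F : ℕ → ℝ → ℝ := fun n t ↦ t ^ (s - 1) * exp (-((n + 1) * a * t))
  have hb (n : ℕ) : 0 < ((n : ℝ) + 1) * a := by positivity
  have hF_int (n : ℕ) : Integrable (F n) (volume.restrict (Ioi 0)) :=
    integrableOn_rpow_mul_exp_neg_mul (by linarith) (hb n)
  have hF_integral (n : ℕ) :
      ∫ t in Ioi 0, F n t = Gamma s / a ^ s * (1 / ((n : ℝ) + 1) ^ s) := by
    rw [integral_rpow_mul_exp_neg_mul_Ioi (by linarith) (hb n),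
      div_rpow zero_le_one (hb n).le, one_rpow, mul_rpow (by positivity) ha.le]
    ring
  have hF_norm (n : ℕ) : ∫ t in Ioi 0, ‖F n t‖ = ∫ t in Ioi 0, F n t :=
    setIntegral_congr_fun measurableSet_Ioi fun t (ht : 0 < t) ↦ norm_of_nonneg (by positivity)
  have hζ : Summable fun n : ℕ ↦ 1 / ((n : ℝ) + 1) ^ s := by
    simpa using (summable_nat_add_iff 1).mpr (summable_one_div_nat_rpow.mpr hs)
  have hF_sum := hasSum_integral_of_summable_integral_norm hF_int
    (by simpa only [hF_norm, hF_integral] using hζ.mul_left (Gamma s / a ^ s))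
  have hF_pointwise (t : ℝ) (ht : t ∈ Ioi 0) :
      t ^ (s - 1) / (exp (a * t) - 1) = ∑' n, F n t := by
    simp_rw [F, mul_assoc _ a]
    rw [tsum_mul_left, (hasSum_exp_neg_nat_add_one_mul (mul_pos ha ht)).tsum_eq, mul_one_div]
  rw [setIntegral_congr_fun measurableSet_Ioi hF_pointwise, ← hF_sum.tsum_eq, ← tsum_mul_left]
  simp only [hF_integral]

theorem integral_pow_div_exp_sub_one (q : ℝ) (hq : 0 < q) (k : ℕ) :
    ∫ t in Set.Ioi (0 : ℝ), t ^ (2 * k + 1) / (Real.exp (2 * π * q * t) - 1) =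
      (-1 : ℝ) ^ k * ((bernoulli (2 * k + 2) : ℚ) : ℝ) / (4 * (k + 1) * q ^ (2 * k + 2)) := by
  have hs : (1 : ℝ) < ((2 * (k + 1) : ℕ) : ℝ) := by exact_mod_cast (by omega : 1 < 2 * (k + 1))
  have hpow (t : ℝ) : t ^ (2 * k + 1) = t ^ (((2 * (k + 1) : ℕ) : ℝ) - 1) := by
    rw [← rpow_natCast]
    push_cast
    ring_nf
  have hΓ : Gamma ((2 * (k + 1) : ℕ) : ℝ) = (2 * k + 1)! := by
    rw [← Gamma_nat_eq_factorial]
    push_cast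
    ring_nf
  simp_rw [hpow]
  rw [integral_rpow_div_exp_sub_one hs (by positivity), hΓ]
  simp_rw [rpow_natCast]
  rw [tsum_one_div_nat_add_one_pow_two_mul k.succ_ne_zero, Nat.mul_succ,
    show (2 * k + 2)! = (2 * k + 2) * (2 * k + 1)! from Nat.factorial_succ _,
    show 2 * k + 2 - 1 = 2 * k + 1 by omega, pow_succ (-1 : ℝ)]
  push_cast
  field_simp
  ring
end
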